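/- arXiv:1702.08038 — 2 statements merged into one kernel-verified Lean document; each statement's English description precedes it below -/
import Mathlib

section
/- The sequence {S(T_{2,4}(n) + X_{n−1}X_n)}_{n≥4}, where T_{2,4}(n) = X_1X_2X_4 + X_2X_3X_5 + ⋯ + X_{n−3}X_{n−2}X_n, satisfies the homogeneous linear recurrence with characteristic polynomial X^5 − 2X^3 − 4; equivalently, the auxiliary sequence a_n = S(T_{2,4}(n) + X_{n−2}X_{n−1} + X_n + X_{n−1}X_n) satisfies a_{n+2} = 2a_n + 4a_{n−3}. -/
open Finset

/-- Exponential sum of a Boolean function in `n` variables. -/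
noncomputable def boolExpSum (n : ℕ) (F : (Fin n → ZMod 2) → ZMod 2) : ℤ :=
  ∑ x : Fin n → ZMod 2, (-1 : ℤ) ^ (F x).val

/-- Extension of a vector `x ∈ F₂ⁿ` to a function on `ℕ` (index `i` corresponds
to the variable `X_{i+1}`; out-of-range indices give `0`). -/
def extVar {n : ℕ} (x : Fin n → ZMod 2) : ℕ → ZMod 2 :=
  fun i => if h : i < n then x ⟨i, h⟩ else 0

/-- `T_{2,4}(n) = X₁X₂X₄ + X₂X₃X₅ + ⋯ + X_{n−3}X_{n−2}Xₙ = ∑_{i=1}^{n−3} X_i X_{i+1} X_{i+3}`. -/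
def T24 (n : ℕ) (x : Fin n → ZMod 2) : ZMod 2 :=
  ∑ i ∈ Finset.range (n - 3), extVar x i * extVar x (i + 1) * extVar x (i + 3)

/-- The sequence `b(n) = S(T_{2,4}(n) + X_{n−1}Xₙ)`. -/
noncomputable def bSeq (n : ℕ) : ℤ :=
  boolExpSum n (fun x => T24 n x + extVar x (n - 2) * extVar x (n - 1))

/-- The auxiliary sequence `a(n) = S(T_{2,4}(n) + X_{n−2}X_{n−1} + Xₙ + X_{n−1}Xₙ)`. -/
noncomputable def aSeq (n : ℕ) : ℤ :=
  boolExpSum n (fun x =>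
    T24 n x + extVar x (n - 3) * extVar x (n - 2) + extVar x (n - 1)
      + extVar x (n - 2) * extVar x (n - 1))

def sgn (a : ZMod 2) : ℤ := (-1) ^ a.val

lemma sgn_add : ∀ a b : ZMod 2, sgn (a + b) = sgn a * sgn b := by decide

def Nvec (n : ℕ) (s : Fin 3 → ZMod 2) : ℤ :=
  ∑ x : Fin n → ZMod 2,
    if extVar x (n - 3) = s 0 ∧ extVar x (n - 2) = s 1 ∧ extVar x (n - 1) = s 2
    then sgn (T24 n x) else 0

def step (f : (Fin 3 → ZMod 2) → ℤ) (s : Fin 3 → ZMod 2) : ℤ :=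
  ∑ u : ZMod 2, f ![u, s 0, s 1] * sgn (u * s 0 * s 2)

def snocEq (n : ℕ) : ((Fin n → ZMod 2) × ZMod 2) ≃ (Fin (n+1) → ZMod 2) where
  toFun p := Fin.snoc p.1 p.2
  invFun y := (Fin.init y, y (Fin.last n))
  left_inv p := by simp [Fin.init_snoc, Fin.snoc_last]
  right_inv y := by simp [Fin.snoc_init_self]

lemma extVar_snoc_lt {n : ℕ} (x : Fin n → ZMod 2) (z : ZMod 2) {i : ℕ} (h : i < n) :
    extVar (Fin.snoc x z : Fin (n+1) → ZMod 2) i = extVar x i := by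
  have h' : i < n + 1 := Nat.lt_succ_of_lt h
  simp only [extVar, dif_pos h, dif_pos h']
  exact @Fin.snoc_castSucc n (fun _ => ZMod 2) z x ⟨i, h⟩

lemma extVar_snoc_last {n : ℕ} (x : Fin n → ZMod 2) (z : ZMod 2) :
    extVar (Fin.snoc x z : Fin (n+1) → ZMod 2) n = z := by
  simp only [extVar, dif_pos (Nat.lt_succ_self n)]
  exact @Fin.snoc_last n (fun _ => ZMod 2) z x

lemma T24_snoc {n : ℕ} (hn : 3 ≤ n) (x : Fin n → ZMod 2) (z : ZMod 2) :
    T24 (n+1) (Fin.snoc x z) = T24 n x + extVar x (n-3) * extVar x (n-2) * z := by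
  unfold T24
  rw [show n + 1 - 3 = (n - 3) + 1 from by omega, Finset.sum_range_succ]
  congr 1
  · exact Finset.sum_congr rfl fun i hi => by
      rw [Finset.mem_range] at hi
      rw [extVar_snoc_lt x z (by omega), extVar_snoc_lt x z (by omega),
        extVar_snoc_lt x z (by omega)]
  · rw [show n - 3 + 1 = n - 2 from by omega, show n - 3 + 3 = n from by omega,
      extVar_snoc_lt x z (by omega), extVar_snoc_lt x z (by omega), extVar_snoc_last]

lemma Nvec_succ {n : ℕ} (hn : 3 ≤ n) : Nvec (n+1) = step (Nvec n) := by
  funext s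
  unfold Nvec step
  rw [← Equiv.sum_comp (snocEq n)
    (fun y => if extVar y (n + 1 - 3) = s 0 ∧ extVar y (n + 1 - 2) = s 1 ∧
        extVar y (n + 1 - 1) = s 2 then sgn (T24 (n+1) y) else 0),
    Fintype.sum_prod_type]
  simp only [snocEq, Equiv.coe_fn_mk]
  simp only [show n + 1 - 3 = n - 2 from by omega, show n + 1 - 2 = n - 1 from by omega,
    show n + 1 - 1 = n from by omega]
  have key : ∀ x : Fin n → ZMod 2,
      (∑ z : ZMod 2, if extVar (Fin.snoc x z : Fin (n+1) → ZMod 2) (n - 2) = s 0 ∧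
          extVar (Fin.snoc x z : Fin (n+1) → ZMod 2) (n - 1) = s 1 ∧
          extVar (Fin.snoc x z : Fin (n+1) → ZMod 2) n = s 2
        then sgn (T24 (n+1) (Fin.snoc x z)) else 0)
      = if extVar x (n - 2) = s 0 ∧ extVar x (n - 1) = s 1
          then sgn (T24 n x) * sgn (extVar x (n-3) * s 0 * s 2) else 0 := by
    intro x
    by_cases h : extVar x (n - 2) = s 0 ∧ extVar x (n - 1) = s 1
    · rw [if_pos h]
      have : ∀ z : ZMod 2,
          (if extVar (Fin.snoc x z : Fin (n+1) → ZMod 2) (n - 2) = s 0 ∧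
              extVar (Fin.snoc x z : Fin (n+1) → ZMod 2) (n - 1) = s 1 ∧
              extVar (Fin.snoc x z : Fin (n+1) → ZMod 2) n = s 2
            then sgn (T24 (n+1) (Fin.snoc x z)) else 0)
          = if z = s 2 then sgn (T24 (n+1) (Fin.snoc x z)) else 0 := by
        intro z
        rw [extVar_snoc_lt x z (by omega), extVar_snoc_lt x z (by omega), extVar_snoc_last]
        by_cases hz : z = s 2
        · rw [if_pos ⟨h.1, h.2, hz⟩, if_pos hz]
        · rw [if_neg (fun hc => hz hc.2.2), if_neg hz]
      rw [Finset.sum_congr rfl fun z _ => this z]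
      rw [Finset.sum_ite_eq' Finset.univ (s 2)
        (fun z => sgn (T24 (n+1) (Fin.snoc x z))), if_pos (Finset.mem_univ _)]
      rw [T24_snoc hn, sgn_add, h.1]
    · rw [if_neg h]
      refine Finset.sum_eq_zero fun z _ => ?_
      rw [extVar_snoc_lt x z (by omega), extVar_snoc_lt x z (by omega)]
      exact if_neg fun hc => h ⟨hc.1, hc.2.1⟩
  rw [Finset.sum_congr rfl fun x _ => key x]
  -- now RHS
  simp only [Matrix.cons_val_zero, Matrix.cons_val_one, Matrix.head_cons,
    Matrix.cons_val_two, Matrix.tail_cons]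
  have rhs1 : ∀ u : ZMod 2,
      (∑ x : Fin n → ZMod 2, if extVar x (n - 3) = u ∧ extVar x (n - 2) = s 0 ∧
          extVar x (n - 1) = s 1 then sgn (T24 n x) else 0) * sgn (u * s 0 * s 2)
      = ∑ x : Fin n → ZMod 2, (if extVar x (n - 3) = u ∧ extVar x (n - 2) = s 0 ∧
          extVar x (n - 1) = s 1 then sgn (T24 n x) * sgn (u * s 0 * s 2) else 0) := by
    intro u
    rw [Finset.sum_mul]
    exact Finset.sum_congr rfl fun x _ => by rw [ite_mul, zero_mul]
  rw [Finset.sum_congr rfl fun u _ => rhs1 u, Finset.sum_comm]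
  refine Finset.sum_congr rfl fun x _ => ?_
  by_cases h : extVar x (n - 2) = s 0 ∧ extVar x (n - 1) = s 1
  · rw [if_pos h]
    have : ∀ u : ZMod 2,
        (if extVar x (n - 3) = u ∧ extVar x (n - 2) = s 0 ∧ extVar x (n - 1) = s 1
          then sgn (T24 n x) * sgn (u * s 0 * s 2) else 0)
        = if extVar x (n - 3) = u then sgn (T24 n x) * sgn (u * s 0 * s 2) else 0 := by
      intro u
      by_cases hu : extVar x (n - 3) = u
      · rw [if_pos ⟨hu, h⟩, if_pos hu]
      · rw [if_neg (fun hc => hu hc.1), if_neg hu]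
    rw [Finset.sum_congr rfl fun u _ => this u,
      Finset.sum_ite_eq Finset.univ (extVar x (n - 3))
        (fun u => sgn (T24 n x) * sgn (u * s 0 * s 2)), if_pos (Finset.mem_univ _)]
  · rw [if_neg h]
    exact (Finset.sum_eq_zero fun u _ => if_neg (fun hc => h ⟨hc.2.1, hc.2.2⟩)).symm

lemma step_pres {f g h : (Fin 3 → ZMod 2) → ℤ} (H : ∀ s, f s = 2 * g s + 4 * h s) :
    ∀ s, step f s = 2 * step g s + 4 * step h s := by
  intro s
  unfold step
  rw [Finset.mul_sum, Finset.mul_sum, ← Finset.sum_add_distrib]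
  exact Finset.sum_congr rfl fun u _ => by rw [H]; ring

lemma Nvec_three : ∀ s, Nvec 3 s = 1 := by decide

lemma Nvec_rec : ∀ m, 3 ≤ m → ∀ s, Nvec (m+5) s = 2 * Nvec (m+3) s + 4 * Nvec m s := by
  intro m hm
  induction m, hm using Nat.le_induction with
  | base =>
    have h3 : Nvec 3 = fun _ => (1 : ℤ) := funext fun s => Nvec_three s
    have e4 : Nvec 4 = step (Nvec 3) := Nvec_succ (by norm_num)
    have e5 : Nvec 5 = step (Nvec 4) := Nvec_succ (by norm_num)
    have e6 : Nvec 6 = step (Nvec 5) := Nvec_succ (by norm_num)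
    have e7 : Nvec 7 = step (Nvec 6) := Nvec_succ (by norm_num)
    have e8 : Nvec 8 = step (Nvec 7) := Nvec_succ (by norm_num)
    show ∀ s, Nvec 8 s = 2 * Nvec 6 s + 4 * Nvec 3 s
    simp only [e8, e7, e6, e5, e4, h3]
    decide
  | succ m hm ih =>
    have e1 : Nvec (m+1+5) = step (Nvec (m+5)) := Nvec_succ (by omega)
    have e2 : Nvec (m+1+3) = step (Nvec (m+3)) := Nvec_succ (by omega)
    have e3 : Nvec (m+1) = step (Nvec m) := Nvec_succ (by omega)
    intro s
    rw [e1, e2, e3]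
    exact step_pres ih s

lemma state_eq_iff {n : ℕ} (x : Fin n → ZMod 2) (s : Fin 3 → ZMod 2) :
    (extVar x (n-3) = s 0 ∧ extVar x (n-2) = s 1 ∧ extVar x (n-1) = s 2) ↔
    ![extVar x (n-3), extVar x (n-2), extVar x (n-1)] = s := by
  constructor
  · rintro ⟨h0, h1, h2⟩
    funext i
    fin_cases i <;> simpa
  · rintro rfl
    refine ⟨by simp, by simp, by simp⟩

lemma sum_repr (n : ℕ) (g : (Fin 3 → ZMod 2) → ZMod 2) :
    boolExpSum n (fun x => T24 n x + g ![extVar x (n-3), extVar x (n-2), extVar x (n-1)])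
      = ∑ s : Fin 3 → ZMod 2, Nvec n s * sgn (g s) := by
  unfold boolExpSum Nvec
  have h1 : ∀ s : Fin 3 → ZMod 2,
      (∑ x : Fin n → ZMod 2, if extVar x (n-3) = s 0 ∧ extVar x (n-2) = s 1 ∧
          extVar x (n-1) = s 2 then sgn (T24 n x) else 0) * sgn (g s)
      = ∑ x : Fin n → ZMod 2,
          (if ![extVar x (n-3), extVar x (n-2), extVar x (n-1)] = s
            then sgn (T24 n x) * sgn (g s) else 0) := by
    intro s
    rw [Finset.sum_mul]
    refine Finset.sum_congr rfl fun x _ => ?_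
    rw [ite_mul, zero_mul]
    exact if_congr (state_eq_iff x s) rfl rfl
  rw [Finset.sum_congr rfl fun s _ => h1 s, Finset.sum_comm]
  refine Finset.sum_congr rfl fun x _ => ?_
  rw [Finset.sum_ite_eq Finset.univ (![extVar x (n-3), extVar x (n-2), extVar x (n-1)])
      (fun s => sgn (T24 n x) * sgn (g s)), if_pos (Finset.mem_univ _)]
  exact sgn_add _ _

lemma bSeq_repr (n : ℕ) :
    bSeq n = ∑ s : Fin 3 → ZMod 2, Nvec n s * sgn (s 1 * s 2) := by
  have h := sum_repr n (fun s => s 1 * s 2)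
  simp only [Matrix.cons_val_one, Matrix.head_cons, Matrix.cons_val_two,
    Matrix.tail_cons] at h
  exact h

lemma aSeq_repr (n : ℕ) :
    aSeq n = ∑ s : Fin 3 → ZMod 2, Nvec n s * sgn (s 0 * s 1 + s 2 + s 1 * s 2) := by
  have h := sum_repr n (fun s => s 0 * s 1 + s 2 + s 1 * s 2)
  simp only [Matrix.cons_val_zero, Matrix.cons_val_one, Matrix.head_cons,
    Matrix.cons_val_two, Matrix.tail_cons] at h
  rw [← h]
  unfold aSeq boolExpSum
  refine Finset.sum_congr rfl fun x _ => ?_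
  ring_nf

/-- The sequence `{S(T_{2,4}(n) + X_{n−1}Xₙ)}` satisfies the homogeneous linear recurrence
with characteristic polynomial `X⁵ − 2X³ − 4`; equivalently, the auxiliary sequence
`a(n) = S(T_{2,4}(n) + X_{n−2}X_{n−1} + Xₙ + X_{n−1}Xₙ)` satisfies
`a(n+2) = 2a(n) + 4a(n−3)`. -/
theorem T24_expSum_linear_recurrence :
    (∀ n : ℕ, 9 ≤ n → bSeq n = 2 * bSeq (n - 2) + 4 * bSeq (n - 5)) ∧
    (∀ n : ℕ, 7 ≤ n → aSeq (n + 2) = 2 * aSeq n + 4 * aSeq (n - 3)) := by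
  constructor
  · intro n hn
    obtain ⟨m, rfl⟩ : ∃ m, n = m + 5 := ⟨n - 5, by omega⟩
    have hm : 3 ≤ m := by omega
    rw [show m + 5 - 2 = m + 3 from by omega, show m + 5 - 5 = m from by omega]
    rw [bSeq_repr, bSeq_repr, bSeq_repr, Finset.mul_sum, Finset.mul_sum,
      ← Finset.sum_add_distrib]
    refine Finset.sum_congr rfl fun s _ => ?_
    rw [Nvec_rec m hm s]; ring
  · intro n hn
    obtain ⟨m, rfl⟩ : ∃ m, n = m + 3 := ⟨n - 3, by omega⟩
    have hm : 3 ≤ m := by omega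
    rw [show m + 3 + 2 = m + 5 from by omega, show m + 3 - 3 = m from by omega]
    rw [aSeq_repr, aSeq_repr, aSeq_repr, Finset.mul_sum, Finset.mul_sum,
      ← Finset.sum_add_distrib]
    refine Finset.sum_congr rfl fun s _ => ?_
    rw [Nvec_rec m hm s]; ring
end

section
/- For every integer k ≥ 3, the sequence {S(R_{2,3,…,k}(n) + R_{2,3,…,k−1}(n))} of exponential sums satisfies the homogeneous linear recurrence with characteristic polynomial X^k − 2X^{k−1} + 2. -/
open Finset

/-- The monomial rotation symmetric Boolean function
`R_{2,3,…,k}(n) = ∑_{i=1}^{n} X_i X_{i+1} ⋯ X_{i+k−1}` with cyclic indices mod `n`. -/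
def rotMonomial (k n : ℕ) (x : Fin n → ZMod 2) : ZMod 2 :=
  ∑ i ∈ Finset.range n, ∏ l ∈ Finset.range k, extVar x ((i + l) % n)

namespace RotRec

open Matrix

/-- transition function of the automaton: state = capped count of trailing ones. -/
def dlt {k : ℕ} (i : Fin k) (b : ZMod 2) : Fin k :=
  if b = 0 then ⟨0, i.pos⟩
  else ⟨min (i.val + 1) (k - 1), by have := i.pos; omega⟩

/-- weight: `-1` exactly when a run of at least `k-1` ones is followed by a zero. -/
def wgt {k : ℕ} (i : Fin k) (b : ZMod 2) : ℤ :=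
  if i.val = k - 1 ∧ b = 0 then -1 else 1

/-- transfer matrix -/
def M (k : ℕ) : Matrix (Fin k) (Fin k) ℤ :=
  Matrix.of fun i j =>
    (if dlt i 0 = j then wgt i 0 else 0) + (if dlt i 1 = j then wgt i 1 else 0)

/-- state after reading `y 0, …, y (m-1)` starting from `i`. -/
def run {k : ℕ} (i : Fin k) (y : ℕ → ZMod 2) : ℕ → Fin k
  | 0 => i
  | m+1 => dlt (run i y m) (y m)

/-- product of weights along the walk. -/
def wt {k : ℕ} (i : Fin k) (y : ℕ → ZMod 2) (m : ℕ) : ℤ :=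
  ∏ j ∈ Finset.range m, wgt (run i y j) (y j)

lemma zmod2_cases : ∀ (a : ZMod 2), a = 0 ∨ a = 1 := by decide

lemma run_congr {k : ℕ} (i : Fin k) {y z : ℕ → ZMod 2} {m : ℕ}
    (h : ∀ j < m, y j = z j) : run i y m = run i z m := by
  induction m with
  | zero => rfl
  | succ m ih =>
      simp only [run, ih (fun j hj => h j (by omega)), h m (by omega)]

lemma wt_congr {k : ℕ} (i : Fin k) {y z : ℕ → ZMod 2} {m : ℕ}
    (h : ∀ j < m, y j = z j) : wt i y m = wt i z m := by
  unfold wt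
  refine Finset.prod_congr rfl fun j hj => ?_
  rw [Finset.mem_range] at hj
  rw [run_congr i (fun l hl => h l (by omega)), h j hj]

lemma run_shift {k : ℕ} (i : Fin k) (y : ℕ → ZMod 2) (m : ℕ) :
    run i y (m + 1) = run (dlt i (y 0)) (fun j => y (j + 1)) m := by
  induction m with
  | zero => rfl
  | succ m ih =>
      show dlt (run i y (m+1)) (y (m+1)) = _
      rw [ih]; rfl

lemma wt_shift {k : ℕ} (i : Fin k) (y : ℕ → ZMod 2) (m : ℕ) :
    wt i y (m + 1) = wgt i (y 0) * wt (dlt i (y 0)) (fun j => y (j + 1)) m := by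
  unfold wt
  rw [Finset.prod_range_succ', mul_comm]
  have h1 : wgt (run i y 0) (y 0) = wgt i (y 0) := rfl
  rw [h1]
  congr 1
  refine Finset.prod_congr rfl fun j hj => ?_
  rw [run_shift]


lemma extVar_cons_succ {m : ℕ} (b : ZMod 2) (x : Fin m → ZMod 2) :
    (fun j => extVar (Fin.cons b x) (j + 1)) = extVar x := by
  funext j
  simp only [extVar]
  by_cases h : j < m
  · rw [dif_pos (by omega : j + 1 < m + 1), dif_pos h]
    have : (⟨j + 1, by omega⟩ : Fin (m + 1)) = Fin.succ ⟨j, h⟩ := rfl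
    rw [this, Fin.cons_succ]
  · rw [dif_neg (by omega), dif_neg h]

lemma extVar_cons_zero {m : ℕ} (b : ZMod 2) (x : Fin m → ZMod 2) :
    extVar (Fin.cons b x) 0 = b := by
  show dite _ _ _ = _
  rw [dif_pos (Nat.succ_pos m)]
  rfl

lemma sum_zmod2 (f : ZMod 2 → ℤ) : ∑ b : ZMod 2, f b = f 0 + f 1 := by
  have h : (Finset.univ : Finset (ZMod 2)) = {0, 1} := by decide
  rw [h, Finset.sum_insert (by decide), Finset.sum_singleton]

lemma pow_apply (k m : ℕ) (i j : Fin k) :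
    (M k ^ m) i j = ∑ x : Fin m → ZMod 2,
      if run i (extVar x) m = j then wt i (extVar x) m else 0 := by
  induction m generalizing i with
  | zero =>
      simp [run, wt, Matrix.one_apply, eq_comm]
  | succ m ih =>
      rw [pow_succ', Matrix.mul_apply]
      have lhs : ∑ i' : Fin k, (M k) i i' * (M k ^ m) i' j
          = wgt i 0 * (M k ^ m) (dlt i 0) j + wgt i 1 * (M k ^ m) (dlt i 1) j := by
        simp only [M, Matrix.of_apply, add_mul, Finset.sum_add_distrib, ite_mul, zero_mul,
          Finset.sum_ite_eq, Finset.mem_univ, if_true]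
      rw [lhs]
      rw [← (Fin.consEquiv (fun _ : Fin (m+1) => ZMod 2)).sum_comp
        (fun x => if run i (extVar x) (m+1) = j then wt i (extVar x) (m+1) else 0)]
      rw [Fintype.sum_prod_type]
      have key : ∀ (b : ZMod 2) (x : Fin m → ZMod 2),
          (if run i (extVar (Fin.cons b x)) (m+1) = j then wt i (extVar (Fin.cons b x)) (m+1) else 0)
          = wgt i b * (if run (dlt i b) (extVar x) m = j then wt (dlt i b) (extVar x) m else 0) := by
        intro b x
        rw [run_shift, wt_shift, extVar_cons_zero, extVar_cons_succ, mul_ite, mul_zero]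
      have ceq : ∀ p : ZMod 2 × (Fin m → ZMod 2),
          (Fin.consEquiv (fun _ : Fin (m+1) => ZMod 2)) p = Fin.cons p.1 p.2 := fun _ => rfl
      simp only [ceq]
      symm
      calc ∑ b : ZMod 2, ∑ x : Fin m → ZMod 2,
            (if run i (extVar (Fin.cons b x)) (m+1) = j then wt i (extVar (Fin.cons b x)) (m+1) else 0)
          = ∑ b : ZMod 2, wgt i b * ∑ x : Fin m → ZMod 2,
            (if run (dlt i b) (extVar x) m = j then wt (dlt i b) (extVar x) m else 0) := by
            refine Finset.sum_congr rfl fun b _ => ?_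
            rw [Finset.mul_sum]
            exact Finset.sum_congr rfl fun x _ => key b x
        _ = wgt i 0 * (M k ^ m) (dlt i 0) j + wgt i 1 * (M k ^ m) (dlt i 1) j := by
            rw [sum_zmod2]
            rw [← ih, ← ih]

/-! ### cyclic state -/

def cstN (k n : ℕ) (y : ℕ → ZMod 2) (j : ℕ) : ℕ :=
  Nat.findGreatest (fun m => ∀ l < m, y (j + n - 1 - l) = 1) (k - 1)

lemma cstN_le (k n : ℕ) (y : ℕ → ZMod 2) (j : ℕ) : cstN k n y j ≤ k - 1 :=
  Nat.findGreatest_le _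

lemma cstN_spec (k n : ℕ) (y : ℕ → ZMod 2) (j : ℕ) :
    ∀ l < cstN k n y j, y (j + n - 1 - l) = 1 := by
  intro l hl
  have h0 : cstN k n y j ≠ 0 := by omega
  exact Nat.findGreatest_of_ne_zero
    (P := fun m => ∀ l < m, y (j + n - 1 - l) = 1) rfl h0 l hl

lemma cstN_eq_top_iff (k n : ℕ) (y : ℕ → ZMod 2) (j : ℕ) :
    cstN k n y j = k - 1 ↔ ∀ l < k - 1, y (j + n - 1 - l) = 1 := by
  constructor
  · intro h
    rcases Nat.eq_zero_or_pos (k - 1) with h0 | h0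
    · intro l hl; omega
    · exact Nat.findGreatest_of_ne_zero
        (P := fun m => ∀ l < m, y (j + n - 1 - l) = 1) h (by omega)
  · intro h
    have h1 := Nat.le_findGreatest
      (P := fun m => ∀ l < m, y (j + n - 1 - l) = 1) (le_refl (k - 1)) h
    have h2 := cstN_le k n y j
    unfold cstN at h2 ⊢
    omega

lemma cstN_succ_zero {k n : ℕ} {y : ℕ → ZMod 2} (hy : ∀ a, y (a + n) = y a)
    {j : ℕ} (hj : y j = 0) : cstN k n y (j + 1) = 0 := by
  apply Nat.findGreatest_eq_zero_iff.2
  intro m hm _ hP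
  have h0 := hP 0 hm
  rw [show j + 1 + n - 1 - 0 = j + n by omega, hy j, hj] at h0
  exact absurd h0 (by decide)

lemma cstN_succ_one {k n : ℕ} {y : ℕ → ZMod 2} (hy : ∀ a, y (a + n) = y a)
    (hk : 2 ≤ k) {j : ℕ} (hj : y j = 1) :
    cstN k n y (j + 1) = min (cstN k n y j + 1) (k - 1) := by
  have equiv : ∀ m : ℕ, (∀ l < m + 1, y (j + 1 + n - 1 - l) = 1) ↔
      (∀ l < m, y (j + n - 1 - l) = 1) := by
    intro m
    constructor
    · intro h l hl
      have h2 := h (l + 1) (by omega)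
      rwa [show j + 1 + n - 1 - (l + 1) = j + n - 1 - l by omega] at h2
    · intro h l hl
      rcases Nat.eq_zero_or_pos l with rfl | hl0
      · rw [show j + 1 + n - 1 - 0 = j + n by omega, hy j]; exact hj
      · rw [show j + 1 + n - 1 - l = j + n - 1 - (l - 1) by omega]
        exact h (l - 1) (by omega)
  by_cases hcase : cstN k n y j = k - 1
  · rw [hcase, show min (k - 1 + 1) (k - 1) = k - 1 by omega]
    apply (cstN_eq_top_iff k n y (j + 1)).2
    intro l hl
    rcases Nat.eq_zero_or_pos l with rfl | hl0
    · rw [show j + 1 + n - 1 - 0 = j + n by omega, hy j]; exact hj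
    · rw [show j + 1 + n - 1 - l = j + n - 1 - (l - 1) by omega]
      exact cstN_spec k n y j (l - 1) (by have := cstN_le k n y j; omega)
  · have htlt : cstN k n y j < k - 1 := lt_of_le_of_ne (cstN_le k n y j) hcase
    rw [show min (cstN k n y j + 1) (k - 1) = cstN k n y j + 1 by omega]
    apply Nat.findGreatest_eq_iff.2
    refine ⟨by omega, fun _ => (equiv _).2 (cstN_spec k n y j), ?_⟩
    intro m hm1 hm2 hP
    have hP' : ∀ l < (m - 1) + 1, y (j + 1 + n - 1 - l) = 1 := by
      rw [show m - 1 + 1 = m by omega]; exact hP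
    have hgt : cstN k n y j < m - 1 := by omega
    exact Nat.findGreatest_is_greatest
      (P := fun m => ∀ l < m, y (j + n - 1 - l) = 1) hgt (by omega) ((equiv (m - 1)).1 hP')

lemma cstN_add_n {k n : ℕ} {y : ℕ → ZMod 2} (hy : ∀ a, y (a + n) = y a)
    (hkn : k ≤ n) (j : ℕ) : cstN k n y (j + n) = cstN k n y j := by
  have key : ∀ l, l < k - 1 → y (j + n + n - 1 - l) = y (j + n - 1 - l) := by
    intro l hl
    rw [show j + n + n - 1 - l = (j + n - 1 - l) + n by omega, hy]
  apply le_antisymm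
  · apply Nat.le_findGreatest (cstN_le k n y (j + n))
    intro l hl
    rw [← key l (by have := cstN_le k n y (j + n); omega)]
    exact cstN_spec k n y (j + n) l hl
  · apply Nat.le_findGreatest (cstN_le k n y j)
    intro l hl
    rw [key l (by have := cstN_le k n y j; omega)]
    exact cstN_spec k n y j l hl

/-- single-step compatibility of `dlt` with the cyclic state. -/
lemma val_step {k n : ℕ} {y : ℕ → ZMod 2} (hy : ∀ a, y (a + n) = y a)
    (hk : 2 ≤ k) (j : ℕ) (s : Fin k) (hs : s.val = cstN k n y j) :
    (dlt s (y j)).val = cstN k n y (j + 1) := by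
  rcases zmod2_cases (y j) with hb | hb
  · rw [hb, cstN_succ_zero hy hb]
    simp [dlt]
  · rw [hb, cstN_succ_one hy hk hb, ← hs]
    simp [dlt]

lemma run_cst {k n : ℕ} {y : ℕ → ZMod 2} (hy : ∀ a, y (a + n) = y a)
    (hk : 2 ≤ k) (i0 : Fin k) (h0 : i0.val = cstN k n y 0) :
    ∀ m, (run i0 y m).val = cstN k n y m := by
  intro m
  induction m with
  | zero => exact h0
  | succ m ih => exact val_step hy hk m _ ih

lemma run_fixed_val {k n : ℕ} {y : ℕ → ZMod 2} (hy : ∀ a, y (a + n) = y a)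
    (hk : 2 ≤ k) (hkn : k ≤ n) (i : Fin k) (hfix : run i y n = i) :
    i.val = cstN k n y 0 := by
  by_cases hz : ∃ p, p < n ∧ y p = 0
  · obtain ⟨p, hp, hyp⟩ := hz
    have step : ∀ m, p < m → m ≤ n → (run i y m).val = cstN k n y m := by
      intro m
      induction m with
      | zero => intro h1 _; omega
      | succ m ih =>
          intro h1 h2
          rcases Nat.lt_or_ge p m with h | h
          · exact val_step hy hk m _ (ih h (by omega))
          · have hpm : p = m := by omega
            subst hpm
            show (dlt (run i y p) (y p)).val = _
            rw [hyp, cstN_succ_zero hy hyp]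
            simp [dlt]
    have h1 := step n (by omega) (le_refl n)
    rw [hfix] at h1
    have h2 := cstN_add_n hy hkn (y := y) 0
    rw [zero_add] at h2
    rw [h1, ← h2]
  · push_neg at hz
    have hall : ∀ p, p < n → y p = 1 := by
      intro p hp
      rcases zmod2_cases (y p) with h | h
      · exact absurd h (hz p hp)
      · exact h
    have mono : ∀ m, m ≤ n → (run i y m).val = min (i.val + m) (k - 1) := by
      intro m
      induction m with
      | zero =>
          intro _
          have := i.isLt
          simp [run]; omega
      | succ m ih =>
          intro h
          show (dlt (run i y m) (y m)).val = _
          rw [hall m (by omega)]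
          have hval := ih (by omega)
          simp only [dlt, if_neg (by decide : ¬ (1 : ZMod 2) = 0)]
          rw [hval]
          omega
    have h1 := mono n (le_refl n)
    rw [hfix] at h1
    have hlt := i.isLt
    have hival : i.val = k - 1 := by omega
    rw [hival]
    symm
    apply (cstN_eq_top_iff k n y 0).2
    intro l hl
    exact hall _ (by omega)

/-! ### character and assembly -/

def chi (a : ZMod 2) : ℤ := if a = 0 then 1 else -1

lemma chi_pow : ∀ a : ZMod 2, (-1 : ℤ) ^ a.val = chi a := by decide

lemma chi_add : ∀ a b : ZMod 2, chi (a + b) = chi a * chi b := by decide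

lemma chi_sum {α : Type*} (s : Finset α) (f : α → ZMod 2) :
    chi (∑ i ∈ s, f i) = ∏ i ∈ s, chi (f i) := by
  induction s using Finset.cons_induction with
  | empty => simp [chi]
  | cons a s ha ih => rw [Finset.sum_cons, Finset.prod_cons, chi_add, ih]

lemma prod_eq_one_iff {α : Type*} (s : Finset α) (f : α → ZMod 2) :
    (∏ i ∈ s, f i) = 1 ↔ ∀ i ∈ s, f i = 1 := by
  constructor
  · intro h i hi
    by_contra hne
    have h0 : f i = 0 := (zmod2_cases (f i)).resolve_right hne
    rw [Finset.prod_eq_zero hi h0] at h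
    exact absurd h (by decide)
  · exact Finset.prod_eq_one

lemma wgt_ne_zero {k : ℕ} (i : Fin k) (b : ZMod 2) : wgt i b ≠ 0 := by
  unfold wgt; split <;> norm_num

def cstF (k n : ℕ) (hk : 0 < k) (y : ℕ → ZMod 2) (j : ℕ) : Fin k :=
  ⟨cstN k n y j, lt_of_le_of_lt (cstN_le k n y j) (by omega)⟩

lemma prod_range_shift (n : ℕ) (g : ℕ → ℤ) (hper : ∀ j, g (j + n) = g j)
    (hne : ∀ j, g j ≠ 0) (c : ℕ) :
    ∏ j ∈ Finset.range n, g (j + c) = ∏ j ∈ Finset.range n, g j := by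
  induction c with
  | zero => simp
  | succ c ih =>
      have one : ∏ j ∈ Finset.range n, g ((j + 1) + c) = ∏ j ∈ Finset.range n, g (j + c) := by
        have e3 : g (n + c) = g (0 + c) := by
          rw [show n + c = (0 + c) + n by omega, hper]
        have key : (∏ j ∈ Finset.range n, g ((j + 1) + c)) * g (0 + c)
            = (∏ j ∈ Finset.range n, g (j + c)) * g (0 + c) := by
          calc (∏ j ∈ Finset.range n, g ((j + 1) + c)) * g (0 + c)
              = ∏ j ∈ Finset.range (n + 1), g (j + c) :=
                (Finset.prod_range_succ' (fun j => g (j + c)) n).symm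
            _ = (∏ j ∈ Finset.range n, g (j + c)) * g (n + c) :=
                Finset.prod_range_succ (fun j => g (j + c)) n
            _ = (∏ j ∈ Finset.range n, g (j + c)) * g (0 + c) := by rw [e3]
        exact mul_right_cancel₀ (hne (0 + c)) key
      calc ∏ j ∈ Finset.range n, g (j + (c + 1))
          = ∏ j ∈ Finset.range n, g ((j + 1) + c) := by
            refine Finset.prod_congr rfl fun j _ => ?_
            congr 1
            omega
        _ = ∏ j ∈ Finset.range n, g (j + c) := one
        _ = ∏ j ∈ Finset.range n, g j := ih

lemma fixed_sum_eq (k n : ℕ) (hk : 3 ≤ k) (hkn : k ≤ n) (x : Fin n → ZMod 2) :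
    ∑ i : Fin k, (if run i (extVar x) n = i then wt i (extVar x) n else 0)
      = chi (rotMonomial k n x + rotMonomial (k - 1) n x) := by
  have hk0 : 0 < k := by omega
  set y : ℕ → ZMod 2 := fun a => extVar x (a % n) with hy_def
  have hy : ∀ a, y (a + n) = y a := by
    intro a; simp only [hy_def, Nat.add_mod_right]
  have hagree : ∀ a, a < n → y a = extVar x a := by
    intro a ha; simp only [hy_def, Nat.mod_eq_of_lt ha]
  set i0 : Fin k := cstF k n hk0 y 0 with hi0
  have hrun : ∀ m, (run i0 y m).val = cstN k n y m :=
    run_cst hy (by omega) i0 rfl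
  have hrunF : ∀ m, run i0 y m = cstF k n hk0 y m :=
    fun m => Fin.ext (hrun m)
  -- left side equals the weight of the unique closed walk
  have hL : ∑ i : Fin k, (if run i (extVar x) n = i then wt i (extVar x) n else 0)
      = wt i0 y n := by
    have hrc : ∀ i : Fin k, run i (extVar x) n = run i y n :=
      fun i => run_congr i (fun j hj => (hagree j hj).symm)
    have hwc : ∀ i : Fin k, wt i (extVar x) n = wt i y n :=
      fun i => wt_congr i (fun j hj => (hagree j hj).symm)
    rw [Finset.sum_eq_single i0]
    · rw [hrc, hwc, if_pos]
      apply Fin.ext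
      rw [hrun n]
      have h2 := cstN_add_n hy hkn (y := y) 0
      rw [zero_add] at h2
      exact h2
    · intro i _ hne
      rw [hrc, hwc, if_neg]
      intro hfix
      exact hne (Fin.ext (run_fixed_val hy (by omega) hkn i hfix))
    · intro h; exact absurd (Finset.mem_univ i0) h
  -- the per-position term computation
  have term : ∀ i : ℕ,
      chi ((∏ l ∈ Finset.range k, y (i + l)) + ∏ l ∈ Finset.range (k - 1), y (i + l))
        = wgt (cstF k n hk0 y (i + (k - 1))) (y (i + (k - 1))) := by
    intro i
    have hsplit : ∏ l ∈ Finset.range k, y (i + l)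
        = (∏ l ∈ Finset.range (k - 1), y (i + l)) * y (i + (k - 1)) := by
      conv_lhs => rw [show k = (k - 1) + 1 by omega]
      rw [Finset.prod_range_succ]
    have hB : (∏ l ∈ Finset.range (k - 1), y (i + l)) = 1
        ↔ cstN k n y (i + (k - 1)) = k - 1 := by
      rw [prod_eq_one_iff, cstN_eq_top_iff]
      constructor
      · intro h l hl
        rw [show i + (k - 1) + n - 1 - l = (i + (k - 2 - l)) + n by omega, hy]
        exact h (k - 2 - l) (Finset.mem_range.2 (by omega))
      · intro h l hl
        rw [Finset.mem_range] at hl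
        have h2 := h (k - 2 - l) (by omega)
        rwa [show i + (k - 1) + n - 1 - (k - 2 - l) = (i + l) + n by omega, hy] at h2
    have hcval : (cstF k n hk0 y (i + (k - 1))).val = cstN k n y (i + (k - 1)) := rfl
    rcases zmod2_cases (∏ l ∈ Finset.range (k - 1), y (i + l)) with hB0 | hB1
    · rw [hsplit, hB0, zero_mul, zero_add]
      show chi 0 = wgt _ _
      unfold wgt
      rw [if_neg]
      · rfl
      · rintro ⟨h1, _⟩
        rw [hcval] at h1
        have := hB.2 h1
        rw [hB0] at this
        exact absurd this (by decide)
    · have hc : cstN k n y (i + (k - 1)) = k - 1 := hB.1 hB1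
      rcases zmod2_cases (y (i + (k - 1))) with hy0 | hy1
      · rw [hsplit, hB1, hy0, one_mul, zero_add]
        show chi 1 = wgt _ _
        unfold wgt
        rw [if_pos ⟨by rw [hcval, hc], rfl⟩]
        rfl
      · rw [hsplit, hB1, hy1, one_mul]
        show chi (1 + 1) = wgt _ _
        unfold wgt
        rw [if_neg]
        · show chi (1 + 1) = 1
          decide
        · rintro ⟨_, h2⟩
          exact absurd h2 (by decide)
  -- right side equals the product of weights over one period
  have hR : chi (rotMonomial k n x + rotMonomial (k - 1) n x)
      = ∏ j ∈ Finset.range n, wgt (cstF k n hk0 y j) (y j) := by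
    unfold rotMonomial
    rw [← Finset.sum_add_distrib, chi_sum]
    have hx2y : ∀ a : ℕ, extVar x (a % n) = y a := fun a => rfl
    simp only [hx2y]
    rw [Finset.prod_congr rfl (fun i _ => term i)]
    exact prod_range_shift n (fun j => wgt (cstF k n hk0 y j) (y j))
      (fun j => by
        have hc := cstN_add_n hy hkn (y := y) j
        have hyy := hy j
        simp only [hyy]
        congr 1
        exact Fin.ext hc)
      (fun j => wgt_ne_zero _ _) (k - 1)
  rw [hL, hR]
  unfold wt
  refine Finset.prod_congr rfl fun j hj => ?_
  rw [hrunF j]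

/-! ### the matrix identity -/

def ebas {k : ℕ} (j : Fin k) : Fin k → ℤ := fun i => if i = j then 1 else 0

lemma mulVec_ebas {k : ℕ} (A : Matrix (Fin k) (Fin k) ℤ) (j : Fin k) :
    A *ᵥ ebas j = fun i => A i j := by
  funext i
  simp [Matrix.mulVec, dotProduct, ebas]

lemma col_low {k : ℕ} (hk : 3 ≤ k) (j j' : Fin k) (h1 : 1 ≤ j.val) (h2 : j.val ≤ k - 2)
    (hj' : j'.val + 1 = j.val) : M k *ᵥ ebas j = ebas j' := by
  rw [mulVec_ebas]
  funext i
  show (if dlt i 0 = j then wgt i 0 else 0) + (if dlt i 1 = j then wgt i 1 else 0) = ebas j' i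
  have hd0 : ¬ dlt i (0 : ZMod 2) = j := by
    unfold dlt
    rw [if_pos rfl, Fin.ext_iff]
    simp only
    omega
  have hw1 : wgt i (1 : ZMod 2) = 1 := by
    unfold wgt
    rw [if_neg (by rintro ⟨_, h⟩; exact absurd h (by decide))]
  have hd1 : (dlt i (1 : ZMod 2) = j) ↔ i = j' := by
    unfold dlt
    rw [if_neg (by decide), Fin.ext_iff, Fin.ext_iff]
    simp only
    have := i.isLt
    have := j'.isLt
    omega
  rw [if_neg hd0, hw1, zero_add]
  unfold ebas
  by_cases h : i = j'
  · rw [if_pos (hd1.2 h), if_pos h]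
  · rw [if_neg (fun hh => h (hd1.1 hh)), if_neg h]

lemma wgt_zero_eq {k : ℕ} (i : Fin k) :
    wgt i (0 : ZMod 2) = if i.val = k - 1 then -1 else 1 := by
  unfold wgt
  by_cases h : i.val = k - 1
  · rw [if_pos ⟨h, rfl⟩, if_pos h]
  · rw [if_neg (fun hc => h hc.1), if_neg h]

lemma wgt_one_eq {k : ℕ} (i : Fin k) : wgt i (1 : ZMod 2) = 1 := by
  unfold wgt
  rw [if_neg (by rintro ⟨_, h⟩; exact absurd h (by decide))]

lemma col_zero {k : ℕ} (hk : 3 ≤ k) (z q : Fin k) (hz : z.val = 0) (hq : q.val = k - 1) :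
    M k *ᵥ ebas z = (fun _ => (1 : ℤ)) - 2 • ebas q := by
  rw [mulVec_ebas]
  funext i
  show (if dlt i 0 = z then wgt i 0 else 0) + (if dlt i 1 = z then wgt i 1 else 0)
      = (fun _ => (1:ℤ)) i - (2 • ebas q) i
  have hd0 : dlt i (0 : ZMod 2) = z := by
    unfold dlt
    rw [if_pos rfl, Fin.ext_iff]
    simp only
    omega
  have hd1 : ¬ dlt i (1 : ZMod 2) = z := by
    unfold dlt
    rw [if_neg (by decide), Fin.ext_iff]
    simp only
    have := i.isLt
    omega
  rw [if_pos hd0, if_neg hd1, add_zero, wgt_zero_eq]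
  unfold ebas
  simp only [Pi.sub_apply, Pi.smul_apply, smul_eq_mul]
  by_cases h : i = q
  · rw [if_pos (by rw [h, hq]), if_pos h]
    norm_num
  · rw [if_neg (fun hh => h (Fin.ext (by omega))), if_neg h]
    norm_num

lemma col_top {k : ℕ} (hk : 3 ≤ k) (q p : Fin k) (hq : q.val = k - 1) (hp : p.val = k - 2) :
    M k *ᵥ ebas q = ebas p + ebas q := by
  rw [mulVec_ebas]
  funext i
  show (if dlt i 0 = q then wgt i 0 else 0) + (if dlt i 1 = q then wgt i 1 else 0)
      = ebas p i + ebas q i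
  have hd0 : ¬ dlt i (0 : ZMod 2) = q := by
    unfold dlt
    rw [if_pos rfl, Fin.ext_iff]
    simp only
    omega
  have hw1 : wgt i (1 : ZMod 2) = 1 := by
    unfold wgt
    rw [if_neg (by rintro ⟨_, h⟩; exact absurd h (by decide))]
  have hd1 : (dlt i (1 : ZMod 2) = q) ↔ (i = p ∨ i = q) := by
    unfold dlt
    rw [if_neg (by decide), Fin.ext_iff, Fin.ext_iff, Fin.ext_iff]
    simp only
    have := i.isLt
    omega
  rw [if_neg hd0, hw1, zero_add]
  unfold ebas
  by_cases h : i = p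
  · have hnq : ¬ i = q := by
      intro hh
      rw [Fin.ext_iff] at h hh
      omega
    rw [if_pos (hd1.2 (Or.inl h)), if_pos h, if_neg hnq]
    norm_num
  · by_cases h2 : i = q
    · rw [if_pos (hd1.2 (Or.inr h2)), if_neg h, if_pos h2]
      norm_num
    · rw [if_neg (fun hh => (hd1.1 hh).elim h h2), if_neg h, if_neg h2]
      norm_num

lemma col_ones {k : ℕ} (hk : 3 ≤ k) (q : Fin k) (hq : q.val = k - 1) :
    M k *ᵥ (fun _ => (1 : ℤ)) = 2 • (fun _ => (1 : ℤ)) - 2 • ebas q := by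
  funext i
  show ∑ j : Fin k, M k i j * 1 = _
  have : ∑ j : Fin k, M k i j * 1 = wgt i 0 + wgt i 1 := by
    simp only [mul_one, M, Matrix.of_apply, Finset.sum_add_distrib,
      Finset.sum_ite_eq, Finset.mem_univ, if_true]
  rw [this, wgt_zero_eq, wgt_one_eq]
  unfold ebas
  simp only [Pi.sub_apply, Pi.smul_apply, smul_eq_mul]
  by_cases h : i = q
  · rw [if_pos (by rw [h, hq]), if_pos h]
    norm_num
  · rw [if_neg (fun hh => h (Fin.ext (by omega))), if_neg h]
    norm_num

lemma M_pow_rec {k : ℕ} (hk : 3 ≤ k) :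
    M k ^ k = 2 • M k ^ (k - 1) - 2 • (1 : Matrix (Fin k) (Fin k) ℤ) := by
  have hk0 : 0 < k := by omega
  obtain ⟨z, hz⟩ : ∃ z : Fin k, z.val = 0 := ⟨⟨0, by omega⟩, rfl⟩
  obtain ⟨p, hp⟩ : ∃ p : Fin k, p.val = k - 2 := ⟨⟨k - 2, by omega⟩, rfl⟩
  obtain ⟨q, hq⟩ : ∃ q : Fin k, q.val = k - 1 := ⟨⟨k - 1, by omega⟩, rfl⟩
  have hMe : ∀ m, m ≤ k - 2 → ∀ j : Fin k, j.val = k - 2 - m → M k ^ m *ᵥ ebas p = ebas j := by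
    intro m
    induction m with
    | zero =>
        intro _ j hj
        have hpj : p = j := Fin.ext (by omega)
        rw [pow_zero, Matrix.one_mulVec, hpj]
    | succ m ih =>
        intro h j hj
        have hstep := ih (by omega : m ≤ k - 2) (⟨k - 2 - m, by omega⟩ : Fin k) rfl
        rw [pow_succ', ← Matrix.mulVec_mulVec, hstep]
        exact col_low hk ⟨k - 2 - m, by omega⟩ j (by show 1 ≤ k - 2 - m; omega)
          (by show k - 2 - m ≤ k - 2; omega) (by show j.val + 1 = k - 2 - m; omega)
  have h6 : M k ^ (k - 2) *ᵥ ebas p = ebas z := hMe (k - 2) le_rfl z (by omega)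
  have h7 : M k ^ (k - 1) *ᵥ ebas p = (fun _ => (1 : ℤ)) - 2 • ebas q := by
    have e : M k ^ (k - 1) = M k ^ 1 * M k ^ (k - 2) := by
      rw [← pow_add]
      congr 1
      omega
    rw [e, pow_one, ← Matrix.mulVec_mulVec, h6]
    exact col_zero hk z q hz hq
  have h8 : M k ^ k *ᵥ ebas p
      = (2 • (fun _ => (1 : ℤ)) - 2 • ebas q) - 2 • (ebas p + ebas q) := by
    have e : M k ^ k = M k ^ 1 * M k ^ (k - 1) := by
      rw [← pow_add]
      congr 1
      omega
    rw [e, pow_one, ← Matrix.mulVec_mulVec, h7]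
    rw [Matrix.mulVec_sub, Matrix.mulVec_smul, col_ones hk q hq, col_top hk q p hq hp]
  set P : Matrix (Fin k) (Fin k) ℤ :=
    M k ^ k - 2 • M k ^ (k - 1) + 2 • (1 : Matrix (Fin k) (Fin k) ℤ) with hPd
  have hPp : P *ᵥ ebas p = 0 := by
    rw [hPd, Matrix.add_mulVec, Matrix.sub_mulVec, Matrix.smul_mulVec,
      Matrix.smul_mulVec, Matrix.one_mulVec, h7, h8]
    funext i
    simp only [Pi.add_apply, Pi.sub_apply, Pi.smul_apply, Pi.zero_apply, smul_eq_mul]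
    ring
  have hcomm : ∀ m : ℕ, P * M k ^ m = M k ^ m * P := by
    intro m
    have c1 : Commute (M k) P := by
      rw [hPd]
      exact (((Commute.refl (M k)).pow_right k).sub_right
        (((Commute.refl (M k)).pow_right (k - 1)).smul_right 2)).add_right
        ((Commute.one_right (M k)).smul_right 2)
    exact ((c1.pow_left m).symm)
  have hPlow : ∀ j : Fin k, j.val ≤ k - 2 → P *ᵥ ebas j = 0 := by
    intro j hj
    have he : ebas j = M k ^ (k - 2 - j.val) *ᵥ ebas p :=
      (hMe (k - 2 - j.val) (by omega) j (by omega)).symm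
    rw [he, Matrix.mulVec_mulVec, hcomm, ← Matrix.mulVec_mulVec, hPp, Matrix.mulVec_zero]
  have hones : (fun _ => (1 : ℤ)) = ∑ j : Fin k, ebas j := by
    funext i
    rw [Finset.sum_apply]
    simp [ebas]
  have hPones : P *ᵥ (fun _ => (1 : ℤ)) = P *ᵥ ebas q := by
    rw [hones]
    have hsum : P *ᵥ (∑ j : Fin k, ebas j) = ∑ j : Fin k, P *ᵥ ebas j := by
      show P.mulVecLin (∑ j : Fin k, ebas j) = _
      rw [map_sum]
      rfl
    rw [hsum, Finset.sum_eq_single q]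
    · intro j _ hne
      apply hPlow
      have h1 := j.isLt
      have h2 : ¬ j.val = k - 1 := fun hh => hne (Fin.ext (by omega))
      omega
    · intro h
      exact absurd (Finset.mem_univ q) h
  have hPq : P *ᵥ ebas q = 0 := by
    have h2q : (2 : ℤ) • ebas q = (fun _ => (1 : ℤ)) - M k *ᵥ ebas z := by
      rw [col_zero hk z q hz hq]
      funext i
      simp only [Pi.smul_apply, Pi.sub_apply, smul_eq_mul]
      ring
    have hPz : P *ᵥ (M k *ᵥ ebas z) = 0 := by
      have hc1 : P * M k = M k * P := by
        have hcm := hcomm 1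
        rwa [pow_one] at hcm
      rw [Matrix.mulVec_mulVec, hc1, ← Matrix.mulVec_mulVec,
        hPlow z (by omega), Matrix.mulVec_zero]
    have key : (2 : ℤ) • (P *ᵥ ebas q) = P *ᵥ ebas q := by
      rw [← Matrix.mulVec_smul, h2q, Matrix.mulVec_sub, hPones, hPz, sub_zero]
    funext i
    have hki := congrFun key i
    simp only [Pi.smul_apply, smul_eq_mul] at hki
    simp only [Pi.zero_apply]
    omega
  have hP0 : P = 0 := by
    ext i j
    have hcol : P *ᵥ ebas j = 0 := by
      by_cases h : j.val = k - 1
      · rw [show j = q from Fin.ext (by omega)]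
        exact hPq
      · exact hPlow j (by have := j.isLt; omega)
    have hcc := congrFun ((mulVec_ebas P j).symm.trans hcol) i
    simpa using hcc
  have hfin : M k ^ k - 2 • M k ^ (k - 1) + 2 • (1 : Matrix (Fin k) (Fin k) ℤ) = 0 := hP0
  rw [← sub_eq_zero]
  rw [show M k ^ k - (2 • M k ^ (k - 1) - 2 • (1 : Matrix (Fin k) (Fin k) ℤ))
      = M k ^ k - 2 • M k ^ (k - 1) + 2 • (1 : Matrix (Fin k) (Fin k) ℤ) from by abel]
  exact hfin

lemma expSum_eq_trace (k n : ℕ) (hk : 3 ≤ k) (hkn : k ≤ n) :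
    boolExpSum n (fun x => rotMonomial k n x + rotMonomial (k - 1) n x)
      = Matrix.trace (M k ^ n) := by
  unfold boolExpSum
  have h1 : ∀ x : Fin n → ZMod 2,
      (-1 : ℤ) ^ ((rotMonomial k n x + rotMonomial (k - 1) n x).val)
        = ∑ i : Fin k, (if run i (extVar x) n = i then wt i (extVar x) n else 0) := by
    intro x
    rw [chi_pow, ← fixed_sum_eq k n hk hkn x]
  rw [Finset.sum_congr rfl (fun x _ => h1 x), Finset.sum_comm]
  rw [Matrix.trace]
  refine Finset.sum_congr rfl fun i _ => ?_
  rw [Matrix.diag]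
  exact (pow_apply k n i i).symm

lemma trace_rec (k : ℕ) (hk : 3 ≤ k) (n : ℕ) (hn : k ≤ n) :
    Matrix.trace (M k ^ n)
      = 2 * Matrix.trace (M k ^ (n - 1)) - 2 * Matrix.trace (M k ^ (n - k)) := by
  have hMn : M k ^ n = 2 • M k ^ (n - 1) - 2 • M k ^ (n - k) := by
    have e : M k ^ n = M k ^ (n - k) * M k ^ k := by
      rw [← pow_add]
      congr 1
      omega
    calc M k ^ n = M k ^ (n - k) * M k ^ k := e
      _ = M k ^ (n - k) * (2 • M k ^ (k - 1) - 2 • 1) := by rw [M_pow_rec hk]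
      _ = 2 • (M k ^ (n - k) * M k ^ (k - 1)) - 2 • (M k ^ (n - k) * 1) := by
          rw [mul_sub, mul_smul_comm, mul_smul_comm]
      _ = 2 • M k ^ (n - 1) - 2 • M k ^ (n - k) := by
          rw [mul_one, ← pow_add, show n - k + (k - 1) = n - 1 by omega]
  rw [hMn, Matrix.trace_sub, Matrix.trace_smul, Matrix.trace_smul, nsmul_eq_mul, nsmul_eq_mul]
  norm_num

end RotRec

/-- For every `k ≥ 3` the sequence `{S(R_{2,3,…,k}(n) + R_{2,3,…,k−1}(n))}` satisfies
the homogeneous linear recurrence with characteristic polynomial `X^k − 2X^{k−1} + 2`,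
i.e. `a(n) = 2a(n−1) − 2a(n−k)` for `n ≥ 2k`. -/
theorem rotation_sum_expSum_linear_recurrence (k : ℕ) (hk : 3 ≤ k) (n : ℕ) (hn : 2 * k ≤ n) :
    boolExpSum n (fun x => rotMonomial k n x + rotMonomial (k - 1) n x) =
      2 * boolExpSum (n - 1) (fun x => rotMonomial k (n - 1) x + rotMonomial (k - 1) (n - 1) x)
        - 2 * boolExpSum (n - k) (fun x => rotMonomial k (n - k) x + rotMonomial (k - 1) (n - k) x) := by
  rw [RotRec.expSum_eq_trace k n hk (by omega),
    RotRec.expSum_eq_trace k (n - 1) hk (by omega),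
    RotRec.expSum_eq_trace k (n - k) hk (by omega)]
  exact RotRec.trace_rec k hk n (by omega)
end
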